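/- With k' = k + w_p for 1 ≤ p ≤ n−1, the bimodule B(k', k) = eH_{k'}e_p y^p satisfies B(k', k) = U_{k'}·e d_{k'}^p y^p + U_{k'}·e y^n, as left U_{k'}-modules inside Q. -/

import Mathlib

/-!
Write `D` for `d_{k'}` and `A` for the algebra generated by `D`, `y` and `γ`. Since `[D, y] ∈ ℂΓ`
and `γ` normalises `ℂy` and `ℂD`, the algebra `A` is spanned by the monomials `γ^c y^a D^b`, and
every commutator `[D^t, y^m]` is a combination of monomials of lower `D`-degree. As `e₀` absorbs
`γ` and `e_p y^p = y^p e₀`, the bimodule `B` is spanned by the elements `e₀ y^a D^b y^p e₀`. Because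
`y` and `D` shift the idempotents `e_i` by `+1` and `-1`, such an element vanishes unless
`b ≡ a + p (mod n)`. If moreover `b ≥ p` it factors as `(e₀ y^a D^(b-p) e₀) (e₀ D^p y^p)`; if
`b < p`, commuting `y^p` past `D^b` leaves elements `e₀ y^(t + jn) D^t e₀` with `j ≥ 1`, which split
off the factor `e₀ y^n` up to commutator terms, by induction on `t`. The reverse inclusion follows
from `e₀ D^p = D^p e_p` and `e₀ y^n = y^(n-p) e_p y^p`.
-/

open Finset

/-- ω = e^{2πi/n}, a primitive n-th root of unity. -/
noncomputable def omegaRoot (n : ℕ) : ℂ := Complex.exp (2 * Real.pi * Complex.I / n)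

section Twist

variable {R Q : Type*} [CommSemiring R] [Semiring Q] [Algebra R Q]

theorem mul_pow_eq_smul_of_mul_eq_smul {c : R} {x g : Q} (h : x * g = c • (g * x)) (b : ℕ) :
    x * g ^ b = c ^ b • (g ^ b * x) := by
  induction b with
  | zero => simp
  | succ b ih =>
    rw [pow_succ, ← mul_assoc, ih, smul_mul_assoc, mul_assoc, h, mul_smul_comm, smul_smul,
      ← mul_assoc, ← pow_succ, ← pow_succ]

theorem pow_mul_pow_eq_smul_of_mul_eq_smul {c : R} {x g : Q} (h : x * g = c • (g * x))
    (a b : ℕ) : x ^ a * g ^ b = c ^ (a * b) • (g ^ b * x ^ a) := by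
  induction a with
  | zero => simp
  | succ a ih =>
    rw [pow_succ', mul_assoc, ih, mul_smul_comm, ← mul_assoc, mul_pow_eq_smul_of_mul_eq_smul h,
      smul_mul_assoc, smul_smul, mul_assoc, ← pow_succ', ← pow_add, Nat.succ_mul, add_comm (a * b)]

theorem mul_inv_eq_smul_of_mul_eq_smul {c : R} {y yinv g : Q} (hy : y * yinv = 1)
    (hy' : yinv * y = 1) (h : y * g = c • (g * y)) : g * yinv = c • (yinv * g) :=
  calc g * yinv = yinv * (y * g) * yinv := by rw [← mul_assoc, hy', one_mul]
    _ = c • (yinv * g) := by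
      rw [h, mul_smul_comm, smul_mul_assoc, mul_assoc, mul_assoc, hy, mul_one]

end Twist

section Span

variable {R Q : Type*} [CommSemiring R] [Semiring Q] [Algebra R Q]

theorem Submodule.apply_mem_of_mem_span {M N : Type*} [AddCommMonoid M] [Module R M]
    [AddCommMonoid N] [Module R N] {S : Set M} {P : Submodule R N} {f : M →ₗ[R] N}
    (h : ∀ s ∈ S, f s ∈ P) {z : M} (hz : z ∈ Submodule.span R S) : f z ∈ P :=
  (Submodule.span_le (p := P.comap f)).mpr h hz

theorem Algebra.adjoin_subset_of_mul_mem {S : Set Q} {M : Submodule R Q} (h1 : 1 ∈ M)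
    (hS : ∀ s ∈ S, ∀ w ∈ M, s * w ∈ M) : (Algebra.adjoin R S : Set Q) ⊆ M := by
  intro x hx
  suffices ∀ w ∈ M, x * w ∈ M by simpa using this 1 h1
  induction hx using Algebra.adjoin_induction with
  | mem s hs => exact hS s hs
  | algebraMap r => exact fun w hw => by rw [← Algebra.smul_def]; exact M.smul_mem r hw
  | add u v _ _ hu hv => exact fun w hw => by rw [add_mul]; exact M.add_mem (hu w hw) (hv w hw)
  | mul u v _ _ hu hv => exact fun w hw => by rw [mul_assoc]; exact hu _ (hv w hw)

end Span

def HasWeight {Q : Type*} [Mul Q] (e : ℤ → Q) (m : ℤ) (x : Q) : Prop :=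
  ∀ i, x * e i = e (i + m) * x

namespace HasWeight

variable {Q : Type*} [Monoid Q] {e : ℤ → Q} {m m' : ℤ} {x x' : Q}

theorem mul (h : HasWeight e m x) (h' : HasWeight e m' x') : HasWeight e (m + m') (x * x') :=
  fun i => by rw [mul_assoc, h' i, ← mul_assoc, h, mul_assoc, add_assoc, add_comm m']

theorem pow (h : HasWeight e m x) (b : ℕ) : HasWeight e (b * m) (x ^ b) := by
  induction b with
  | zero => intro i; simp
  | succ b ih => simpa [pow_succ, add_mul] using ih.mul h

end HasWeight

section CyclicIdempotent

variable {K Q : Type*} [Field K] [Ring Q] [Algebra K Q]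

/-- The idempotent `e_i` of `ℂΓ`, indexed by `i : ℤ` so that weights can be negative. -/
noncomputable def cyclicIdempotent (ζ : K) (n : ℕ) (γ : Q) (i : ℤ) : Q :=
  (n : K)⁻¹ • ∑ j ∈ range n, (ζ ^ i • γ) ^ j

variable {ζ : K} {n : ℕ} {γ : Q}

local notation "ε" => cyclicIdempotent ζ n γ

theorem cyclicIdempotent_mem_span (i : ℤ) : ε i ∈ Submodule.span K (Set.range (γ ^ ·)) :=
  Submodule.smul_mem _ _ <| Submodule.sum_mem _ fun j _ => by
    rw [smul_pow]
    exact Submodule.smul_mem _ _ (Submodule.subset_span ⟨j, rfl⟩)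

theorem cyclicIdempotent_zero_mul_pow (hγ : γ ^ n = 1) (c : ℕ) : ε 0 * γ ^ c = ε 0 := by
  have hγ1 : ε 0 * γ = ε 0 := by
    have := geom_sum_mul γ n
    rw [hγ, sub_self, mul_sub, mul_one, sub_eq_zero] at this
    simp only [cyclicIdempotent, zpow_zero, one_smul, smul_mul_assoc, this]
  induction c with
  | zero => rw [pow_zero, mul_one]
  | succ c ih => rw [pow_succ, ← mul_assoc, ih, hγ1]

theorem IsPrimitiveRoot.geom_sum_zpow_eq_ite (hζ : IsPrimitiveRoot ζ n) (j : ℤ) :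
    ∑ a ∈ range n, (ζ ^ j) ^ a = if (n : ℤ) ∣ j then (n : K) else 0 := by
  split_ifs with hj
  · simp [(hζ.zpow_eq_one_iff_dvd j).mpr hj]
  · have hne : ζ ^ j - 1 ≠ 0 := sub_ne_zero.mpr fun h => hj ((hζ.zpow_eq_one_iff_dvd j).mp h)
    have hpow : (ζ ^ j) ^ n = 1 := by rw [← zpow_natCast, ← zpow_mul, mul_comm, zpow_mul,
      zpow_natCast, hζ.pow_eq_one, one_zpow]
    have := geom_sum_mul (ζ ^ j) n
    rw [hpow, sub_self] at this
    exact (mul_eq_zero.mp this).resolve_right hne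

theorem cyclicIdempotent_zero_mul [NeZero n] (hζ : IsPrimitiveRoot ζ n) (hγ : γ ^ n = 1)
    (j : ℤ) : ε 0 * ε j = if (n : ℤ) ∣ j then ε 0 else 0 := by
  have hsum : ε 0 * ε j = (n : K)⁻¹ • (∑ a ∈ range n, (ζ ^ j) ^ a) • ε 0 := by
    rw [cyclicIdempotent.eq_1 ζ n γ j, mul_smul_comm, Finset.mul_sum, Finset.sum_smul]
    simp only [smul_pow, mul_smul_comm, cyclicIdempotent_zero_mul_pow hγ]
  have hn : (n : K) ≠ 0 := (hζ.neZero').out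
  rw [hsum, hζ.geom_sum_zpow_eq_ite]
  split_ifs <;> simp [hn]

theorem cyclicIdempotent_eq_of_dvd (hζ : IsPrimitiveRoot ζ n) {i : ℤ} (hi : (n : ℤ) ∣ i) :
    ε i = ε 0 := by
  simp only [cyclicIdempotent, (hζ.zpow_eq_one_iff_dvd i).mpr hi, zpow_zero]

theorem hasWeight_of_mul_eq_smul (hζ : ζ ≠ 0) {x : Q} {m : ℤ} (h : x * γ = ζ ^ m • (γ * x)) :
    HasWeight ε m x := by
  intro i
  simp only [cyclicIdempotent, mul_smul_comm, smul_mul_assoc, Finset.mul_sum, Finset.sum_mul,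
    smul_pow]
  congr 1
  refine Finset.sum_congr rfl fun j _ => ?_
  rw [mul_pow_eq_smul_of_mul_eq_smul h, smul_smul, ← mul_pow, ← zpow_add₀ hζ]

theorem HasWeight.commute_of_dvd (hζ : IsPrimitiveRoot ζ n) {x : Q} {m : ℤ}
    (h : HasWeight ε m x) (hm : (n : ℤ) ∣ m) : x * ε 0 = ε 0 * x := by
  rw [h, zero_add, cyclicIdempotent_eq_of_dvd hζ hm]

theorem HasWeight.mul_mul_eq_zero [NeZero n] (hζ : IsPrimitiveRoot ζ n) (hγ : γ ^ n = 1)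
    {x : Q} {m : ℤ} (h : HasWeight ε m x) (hm : ¬ (n : ℤ) ∣ m) : ε 0 * x * ε 0 = 0 := by
  rw [mul_assoc, h, zero_add, ← mul_assoc, cyclicIdempotent_zero_mul hζ hγ, if_neg hm, zero_mul]

end CyclicIdempotent

section Monomials

variable (R : Type*) {Q : Type*} [CommRing R] [Ring Q] [Algebra R Q]

def monomialSpan (γ y D : Q) (P : ℕ → ℕ → Prop) : Submodule R Q :=
  Submodule.span R {x | ∃ c s t, P s t ∧ x = γ ^ c * y ^ s * D ^ t}

variable {R} {γ y D : Q} {c₁ c₂ : R}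

theorem monomial_mem_monomialSpan {P : ℕ → ℕ → Prop} (c : ℕ) {s t : ℕ} (h : P s t) :
    γ ^ c * y ^ s * D ^ t ∈ monomialSpan R γ y D P :=
  Submodule.subset_span ⟨c, s, t, h, rfl⟩

theorem mul_pow_mem_monomialSpan {P : ℕ → ℕ → Prop} (c : ℕ) {s : ℕ} (h : P s 0) :
    γ ^ c * y ^ s ∈ monomialSpan R γ y D P := by
  simpa using monomial_mem_monomialSpan (D := D) c h

theorem monomialSpan_mono {P P' : ℕ → ℕ → Prop} (h : ∀ s t, P s t → P' s t) :
    monomialSpan R γ y D P ≤ monomialSpan R γ y D P' :=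
  Submodule.span_mono fun _ ⟨c, s, t, hst, hx⟩ => ⟨c, s, t, h s t hst, hx⟩

theorem commutator_pow_right_mem (hyγ : y * γ = c₁ • (γ * y))
    (hDy : D * y - y * D ∈ Submodule.span R (Set.range (γ ^ ·))) (a : ℕ) :
    D * y ^ a - y ^ a * D ∈ monomialSpan R γ y D (fun s t => t = 0 ∧ s + 1 = a) := by
  induction a with
  | zero => simp
  | succ a ih =>
    have hsplit : D * y ^ (a + 1) - y ^ (a + 1) * D
        = y * (D * y ^ a - y ^ a * D) + (D * y - y * D) * y ^ a := by
      rw [pow_succ']; noncomm_ring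
    rw [hsplit]
    refine Submodule.add_mem _ ?_ ?_
    · refine Submodule.apply_mem_of_mem_span (f := LinearMap.mulLeft R y) ?_ ih
      rintro _ ⟨c, s, t, ⟨rfl, rfl⟩, rfl⟩
      rw [LinearMap.mulLeft_apply, pow_zero, mul_one, ← mul_assoc,
        mul_pow_eq_smul_of_mul_eq_smul hyγ, smul_mul_assoc, mul_assoc, ← pow_succ']
      exact Submodule.smul_mem _ _ (mul_pow_mem_monomialSpan c ⟨rfl, rfl⟩)
    · refine Submodule.apply_mem_of_mem_span (f := LinearMap.mulRight R (y ^ a)) ?_ hDy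
      rintro _ ⟨c, rfl⟩
      exact mul_pow_mem_monomialSpan c ⟨rfl, rfl⟩

theorem mul_monomial_mem (hyγ : y * γ = c₁ • (γ * y)) (hDγ : D * γ = c₂ • (γ * D))
    (hDy : D * y - y * D ∈ Submodule.span R (Set.range (γ ^ ·))) (c s t : ℕ) :
    D * (γ ^ c * y ^ s * D ^ t) ∈
      monomialSpan R γ y D (fun s' t' => t' ≤ t + 1 ∧ s' + (t + 1) = t' + s) := by
  have hsplit : D * (γ ^ c * y ^ s * D ^ t) = c₂ ^ c •
      (γ ^ c * y ^ s * D ^ (t + 1) + γ ^ c * (D * y ^ s - y ^ s * D) * D ^ t) := by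
    rw [← mul_assoc, ← mul_assoc, mul_pow_eq_smul_of_mul_eq_smul hDγ, smul_mul_assoc,
      smul_mul_assoc, pow_succ']
    congr 1
    noncomm_ring
  rw [hsplit]
  refine Submodule.smul_mem _ _
    (Submodule.add_mem _ (monomial_mem_monomialSpan c ⟨le_rfl, add_comm _ _⟩) ?_)
  refine Submodule.apply_mem_of_mem_span
    (f := LinearMap.mulRight R (D ^ t) ∘ₗ LinearMap.mulLeft R (γ ^ c)) ?_
    (commutator_pow_right_mem hyγ hDy s)
  rintro _ ⟨c', s', t', ⟨rfl, hs'⟩, rfl⟩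
  simp only [LinearMap.comp_apply, LinearMap.mulLeft_apply, LinearMap.mulRight_apply, pow_zero,
    mul_one, ← mul_assoc, ← pow_add]
  exact monomial_mem_monomialSpan _ ⟨by omega, by omega⟩

theorem commutator_pow_mem (hyγ : y * γ = c₁ • (γ * y)) (hDγ : D * γ = c₂ • (γ * D))
    (hDy : D * y - y * D ∈ Submodule.span R (Set.range (γ ^ ·))) (a b : ℕ) :
    D ^ b * y ^ a - y ^ a * D ^ b ∈
      monomialSpan R γ y D (fun s t => t < b ∧ s + b = t + a) := by
  induction b with
  | zero => simp
  | succ b ih =>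
    have hsplit : D ^ (b + 1) * y ^ a - y ^ a * D ^ (b + 1)
        = D * (D ^ b * y ^ a - y ^ a * D ^ b) + (D * y ^ a - y ^ a * D) * D ^ b := by
      rw [pow_succ']; noncomm_ring
    rw [hsplit]
    refine Submodule.add_mem _ ?_ ?_
    · refine Submodule.apply_mem_of_mem_span (f := LinearMap.mulLeft R D) ?_ ih
      rintro _ ⟨c, s, t, ⟨ht, hst⟩, rfl⟩
      refine monomialSpan_mono ?_ (mul_monomial_mem hyγ hDγ hDy c s t)
      omega
    · refine Submodule.apply_mem_of_mem_span (f := LinearMap.mulRight R (D ^ b)) ?_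
        (commutator_pow_right_mem hyγ hDy a)
      rintro _ ⟨c, s, t, ⟨rfl, hs⟩, rfl⟩
      rw [LinearMap.mulRight_apply, pow_zero, mul_one]
      exact monomial_mem_monomialSpan c ⟨by omega, by omega⟩

theorem adjoin_subset_monomialSpan (hyγ : y * γ = c₁ • (γ * y)) (hDγ : D * γ = c₂ • (γ * D))
    (hDy : D * y - y * D ∈ Submodule.span R (Set.range (γ ^ ·))) :
    (Algebra.adjoin R {D, y, γ} : Set Q) ⊆ monomialSpan R γ y D (fun _ _ => True) := by
  refine Algebra.adjoin_subset_of_mul_mem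
    (by simpa using
      mul_pow_mem_monomialSpan (R := R) (γ := γ) (y := y) (D := D) 0 (s := 0) trivial) ?_
  rintro g (rfl | rfl | rfl) w hw
  all_goals
    refine Submodule.apply_mem_of_mem_span (f := LinearMap.mulLeft R _) ?_ hw
    rintro _ ⟨c, s, t, -, rfl⟩
    simp only [LinearMap.mulLeft_apply]
  · exact monomialSpan_mono (fun _ _ _ => trivial) (mul_monomial_mem hyγ hDγ hDy c s t)
  · rw [← mul_assoc, ← mul_assoc, mul_pow_eq_smul_of_mul_eq_smul hyγ, smul_mul_assoc,
      smul_mul_assoc, mul_assoc (γ ^ c), ← pow_succ']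
    exact Submodule.smul_mem _ _ (monomial_mem_monomialSpan c trivial)
  · rw [← mul_assoc, ← mul_assoc, ← pow_succ']
    exact monomial_mem_monomialSpan _ trivial

end Monomials

section Corner

variable (R : Type*) {Q : Type*} [CommSemiring R] [Semiring Q] [Algebra R Q]

def cornerSpan (e f : Q) (S : Subalgebra R Q) : Submodule R Q :=
  Submodule.span R ((fun h => e * h * f) '' S)

variable {R} {S : Subalgebra R Q} {e f g h : Q}

theorem mul_mem_cornerSpan_mul (hh : h ∈ S) :
    e * h * e * g ∈ cornerSpan R e e S * Submodule.span R {g} :=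
  Submodule.mul_mem_mul (Submodule.subset_span ⟨h, hh, rfl⟩) (Submodule.mem_span_singleton_self g)

theorem cornerSpan_mul_span_singleton_le {x : Q} (hx : x ∈ S) (hg : e * g = x * f) :
    cornerSpan R e e S * Submodule.span R {g} ≤ cornerSpan R e f S := by
  refine Submodule.mul_le.mpr fun u hu v hv => ?_
  obtain ⟨r, rfl⟩ := Submodule.mem_span_singleton.mp hv
  rw [mul_smul_comm]
  refine Submodule.smul_mem _ r
    (Submodule.apply_mem_of_mem_span (f := LinearMap.mulRight R g) ?_ hu)
  rintro _ ⟨h, hh, rfl⟩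
  rw [LinearMap.mulRight_apply, mul_assoc, hg, ← mul_assoc]
  exact Submodule.subset_span ⟨h * x, S.mul_mem hh hx, by simp only [mul_assoc]⟩

end Corner

/-- The relations between `γ`, `y` and the Dunkl operator `D = d_{k'}` that the argument uses. -/
structure IsDunklTriple {K Q : Type*} [Field K] [Ring Q] [Algebra K Q] (ζ : K) (n : ℕ)
    (γ y D : Q) : Prop where
  isPrimitiveRoot : IsPrimitiveRoot ζ n
  pow_eq_one : γ ^ n = 1
  y_mul_γ : y * γ = ζ • (γ * y)
  D_mul_γ : D * γ = ζ⁻¹ • (γ * D)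
  commutator_mem : D * y - y * D ∈ Submodule.span K (Set.range (γ ^ ·))

theorem isDunklTriple_sub_inv_mul {K Q : Type*} [Field K] [Ring Q] [Algebra K Q] {ζ : K} {n : ℕ}
    [NeZero n] {d y yinv γ C : Q} (hζ : IsPrimitiveRoot ζ n) (hγ : γ ^ n = 1)
    (hy : y * yinv = 1) (hy' : yinv * y = 1) (hWeyl : d * y - y * d = 1)
    (hyγ : y * γ = ζ • (γ * y)) (hγd : γ * d = ζ • (d * γ))
    (hC : C ∈ Submodule.span K (Set.range (γ ^ ·))) :
    IsDunklTriple ζ n γ y (d - yinv * C) := by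
  have hζ0 : ζ ≠ 0 := hζ.ne_zero (NeZero.ne n)
  have hγC : γ * C = C * γ := by
    have hcent : Submodule.span K (Set.range (γ ^ ·)) ≤
        (Subalgebra.centralizer K {γ}).toSubmodule :=
      Submodule.span_le.mpr <| Set.range_subset_iff.mpr fun c =>
        (Subalgebra.mem_centralizer_iff K).mpr fun g hg => by
          rw [Set.mem_singleton_iff.mp hg]; exact (Commute.self_pow γ c).eq
    exact (Subalgebra.mem_centralizer_iff K).mp (hcent hC) γ rfl
  have hγD : γ * (d - yinv * C) = ζ • ((d - yinv * C) * γ) := by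
    rw [mul_sub, ← mul_assoc, mul_inv_eq_smul_of_mul_eq_smul hy hy' hyγ, hγd, smul_mul_assoc,
      mul_assoc, hγC, ← smul_sub, sub_mul, mul_assoc]
  refine ⟨hζ, hγ, hyγ, by rw [hγD, smul_smul, inv_mul_cancel₀ hζ0, one_smul], ?_⟩
  have hcomm : (d - yinv * C) * y - y * (d - yinv * C) = 1 + C - yinv * C * y :=
    calc _ = (d * y - y * d) + y * yinv * C - yinv * C * y := by noncomm_ring
      _ = 1 + C - yinv * C * y := by rw [hWeyl, hy, one_mul]
  rw [hcomm]
  refine Submodule.sub_mem _ (Submodule.add_mem _ (Submodule.subset_span ⟨0, pow_zero γ⟩) hC) ?_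
  refine Submodule.apply_mem_of_mem_span
    (f := LinearMap.mulRight K y ∘ₗ LinearMap.mulLeft K yinv) ?_ hC
  rintro _ ⟨c, rfl⟩
  have hconj : γ ^ c = ζ ^ c • (yinv * γ ^ c * y) := by
    calc γ ^ c = yinv * (y * γ ^ c) := by rw [← mul_assoc, hy', one_mul]
      _ = ζ ^ c • (yinv * γ ^ c * y) := by
        rw [mul_pow_eq_smul_of_mul_eq_smul hyγ, mul_smul_comm, mul_assoc]
  show yinv * γ ^ c * y ∈ _
  rw [(eq_inv_smul_iff₀ (pow_ne_zero c hζ0)).mpr hconj.symm]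
  exact Submodule.smul_mem _ _ (Submodule.subset_span ⟨c, rfl⟩)

namespace IsDunklTriple

variable {K Q : Type*} [Field K] [Ring Q] [Algebra K Q] {ζ : K} {n : ℕ} {γ y D : Q}

local notation "ε" => cyclicIdempotent ζ n γ

theorem hasWeight_y [NeZero n] (T : IsDunklTriple ζ n γ y D) : HasWeight ε 1 y :=
  hasWeight_of_mul_eq_smul (T.isPrimitiveRoot.ne_zero (NeZero.ne n))
    (by rw [zpow_one]; exact T.y_mul_γ)

theorem hasWeight_D [NeZero n] (T : IsDunklTriple ζ n γ y D) : HasWeight ε (-1) D :=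
  hasWeight_of_mul_eq_smul (T.isPrimitiveRoot.ne_zero (NeZero.ne n))
    (by rw [zpow_neg_one]; exact T.D_mul_γ)

theorem idem_mul_idem [NeZero n] (T : IsDunklTriple ζ n γ y D) : ε 0 * ε 0 = ε 0 := by
  simpa using cyclicIdempotent_zero_mul T.isPrimitiveRoot T.pow_eq_one 0

theorem y_pow_mul_idem [NeZero n] (T : IsDunklTriple ζ n γ y D) (p : ℕ) :
    y ^ p * ε 0 = ε p * y ^ p := by
  simpa using T.hasWeight_y.pow p 0

theorem idem_mul_D_pow [NeZero n] (T : IsDunklTriple ζ n γ y D) (p : ℕ) :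
    ε 0 * D ^ p = D ^ p * ε p := by
  have := (T.hasWeight_D.pow p p).symm
  rwa [mul_neg_one, add_neg_cancel] at this

theorem sandwich_commutator_mem (T : IsDunklTriple ζ n γ y D) {M : Submodule K Q} {a t m : ℕ}
    (h : ∀ s t', t' < t → s + t = t' + m → ε 0 * (y ^ (a + s) * D ^ t') * ε 0 ∈ M) :
    ε 0 * (y ^ a * (D ^ t * y ^ m - y ^ m * D ^ t)) * ε 0 ∈ M := by
  rw [← mul_assoc (ε 0) (y ^ a)]
  refine Submodule.apply_mem_of_mem_span
    (f := LinearMap.mulRight K (ε 0) ∘ₗ LinearMap.mulLeft K (ε 0 * y ^ a)) ?_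
    (commutator_pow_mem T.y_mul_γ T.D_mul_γ T.commutator_mem m t)
  rintro _ ⟨c, s, t', ⟨ht', hst'⟩, rfl⟩
  show ε 0 * y ^ a * (γ ^ c * y ^ s * D ^ t') * ε 0 ∈ M
  have hmove : ε 0 * y ^ a * (γ ^ c * y ^ s * D ^ t') * ε 0
      = ζ ^ (a * c) • (ε 0 * (y ^ (a + s) * D ^ t') * ε 0) :=
    calc _ = ε 0 * (y ^ a * γ ^ c) * (y ^ s * D ^ t') * ε 0 := by simp only [mul_assoc]
      _ = ζ ^ (a * c) • (ε 0 * γ ^ c * (y ^ a * y ^ s * D ^ t') * ε 0) := by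
        rw [pow_mul_pow_eq_smul_of_mul_eq_smul T.y_mul_γ]
        simp only [mul_smul_comm, smul_mul_assoc, mul_assoc]
      _ = _ := by rw [cyclicIdempotent_zero_mul_pow T.pow_eq_one, pow_add]
  rw [hmove]
  exact M.smul_mem _ (h s t' ht' hst')

theorem idem_commute_y_pow [NeZero n] (T : IsDunklTriple ζ n γ y D) :
    y ^ n * ε 0 = ε 0 * y ^ n :=
  (T.hasWeight_y.pow n).commute_of_dvd T.isPrimitiveRoot (by simp)

theorem idem_commute_D_pow_mul_y_pow [NeZero n] (T : IsDunklTriple ζ n γ y D) (p : ℕ) :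
    D ^ p * y ^ p * ε 0 = ε 0 * (D ^ p * y ^ p) :=
  ((T.hasWeight_D.pow p).mul (T.hasWeight_y.pow p)).commute_of_dvd T.isPrimitiveRoot (by simp)

theorem sandwich_y_pow_mem [NeZero n] (T : IsDunklTriple ζ n γ y D) {M : Submodule K Q}
    (hM : cornerSpan K (ε 0) (ε 0) (Algebra.adjoin K {D, y, γ}) *
      Submodule.span K {ε 0 * y ^ n} ≤ M) (j t : ℕ) :
    ε 0 * (y ^ (t + (j + 1) * n) * D ^ t) * ε 0 ∈ M := by
  induction t using Nat.strong_induction_on with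
  | _ t ih =>
  have hsplit : ε 0 * (y ^ (t + (j + 1) * n) * D ^ t) * ε 0
      = ε 0 * (y ^ (t + j * n) * D ^ t) * ε 0 * (ε 0 * y ^ n)
        - ε 0 * (y ^ (t + j * n) * (D ^ t * y ^ n - y ^ n * D ^ t)) * ε 0 := by
    rw [mul_assoc _ (ε 0), ← mul_assoc (ε 0) (ε 0), T.idem_mul_idem, ← T.idem_commute_y_pow,
      show t + (j + 1) * n = t + j * n + n by ring, pow_add]
    noncomm_ring
  rw [hsplit]
  refine Submodule.sub_mem _ (hM (mul_mem_cornerSpan_mul ?_)) (T.sandwich_commutator_mem ?_)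
  · exact Subalgebra.mul_mem _ (Subalgebra.pow_mem _ (Algebra.subset_adjoin (by simp)) _)
      (Subalgebra.pow_mem _ (Algebra.subset_adjoin (by simp)) _)
  · intro s t' ht' hst'
    rw [show t + j * n + s = t' + (j + 1) * n by linarith]
    exact ih t' ht'

theorem sandwich_mem_of_dvd [NeZero n] (T : IsDunklTriple ζ n γ y D) {M : Submodule K Q}
    {p : ℕ} (hM₁ : cornerSpan K (ε 0) (ε 0) (Algebra.adjoin K {D, y, γ}) *
      Submodule.span K {ε 0 * D ^ p * y ^ p} ≤ M)
    (hM₂ : cornerSpan K (ε 0) (ε 0) (Algebra.adjoin K {D, y, γ}) *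
      Submodule.span K {ε 0 * y ^ n} ≤ M) {a b : ℕ} (hab : (n : ℤ) ∣ a + p - b) :
    ε 0 * (y ^ a * D ^ b * y ^ p) * ε 0 ∈ M := by
  rcases le_or_gt p b with hpb | hbp
  · have hfactor : ε 0 * (y ^ a * D ^ b * y ^ p) * ε 0
        = ε 0 * (y ^ a * D ^ (b - p)) * ε 0 * (ε 0 * D ^ p * y ^ p) := by
      calc ε 0 * (y ^ a * D ^ b * y ^ p) * ε 0
          = ε 0 * (y ^ a * D ^ (b - p)) * (D ^ p * y ^ p * ε 0) := by
            rw [← Nat.sub_add_cancel hpb, pow_add, Nat.add_sub_cancel]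
            simp only [mul_assoc]
        _ = ε 0 * (y ^ a * D ^ (b - p)) * ε 0 * (ε 0 * D ^ p * y ^ p) := by
            rw [T.idem_commute_D_pow_mul_y_pow]
            simp only [mul_assoc]
            rw [← mul_assoc (ε 0) (ε 0), T.idem_mul_idem]
    rw [hfactor]
    refine hM₁ (mul_mem_cornerSpan_mul ?_)
    exact Subalgebra.mul_mem _ (Subalgebra.pow_mem _ (Algebra.subset_adjoin (by simp)) _)
      (Subalgebra.pow_mem _ (Algebra.subset_adjoin (by simp)) _)
  · obtain ⟨q, hq⟩ := hab
    have hq0 : 0 < q := pos_of_mul_pos_right (by omega : (0 : ℤ) < n * q) (by positivity)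
    lift q to ℕ using hq0.le
    obtain ⟨j, rfl⟩ := Nat.exists_eq_add_one_of_ne_zero (by omega : q ≠ 0)
    have hj : a + p = b + (j + 1) * n := by
      have : ((a + p : ℕ) : ℤ) = ((b + (j + 1) * n : ℕ) : ℤ) := by push_cast at hq ⊢; linarith
      exact_mod_cast this
    have hsplit : ε 0 * (y ^ a * D ^ b * y ^ p) * ε 0
        = ε 0 * (y ^ (a + p) * D ^ b) * ε 0
          + ε 0 * (y ^ a * (D ^ b * y ^ p - y ^ p * D ^ b)) * ε 0 := by
      rw [pow_add]; noncomm_ring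
    rw [hsplit, hj]
    refine Submodule.add_mem _ (T.sandwich_y_pow_mem hM₂ j b) (T.sandwich_commutator_mem ?_)
    intro s t' _ hst'
    rw [show a + s = t' + (j + 1) * n by linarith]
    exact T.sandwich_y_pow_mem hM₂ j t'

theorem sandwich_monomial_mem [NeZero n] (T : IsDunklTriple ζ n γ y D) {M : Submodule K Q}
    {p : ℕ} (hM₁ : cornerSpan K (ε 0) (ε 0) (Algebra.adjoin K {D, y, γ}) *
      Submodule.span K {ε 0 * D ^ p * y ^ p} ≤ M)
    (hM₂ : cornerSpan K (ε 0) (ε 0) (Algebra.adjoin K {D, y, γ}) *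
      Submodule.span K {ε 0 * y ^ n} ≤ M) (c a b : ℕ) :
    ε 0 * (γ ^ c * y ^ a * D ^ b) * (ε p * y ^ p) ∈ M := by
  have hsandwich : ε 0 * (γ ^ c * y ^ a * D ^ b) * (ε p * y ^ p)
      = ε 0 * (y ^ a * D ^ b * y ^ p) * ε 0 :=
    calc _ = ε 0 * γ ^ c * (y ^ a * D ^ b * (ε p * y ^ p)) := by simp only [mul_assoc]
      _ = ε 0 * (y ^ a * D ^ b * (y ^ p * ε 0)) := by
        rw [cyclicIdempotent_zero_mul_pow T.pow_eq_one, ← T.y_pow_mul_idem]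
      _ = _ := by simp only [mul_assoc]
  rw [hsandwich]
  by_cases hab : (n : ℤ) ∣ a + p - b
  · exact T.sandwich_mem_of_dvd hM₁ hM₂ hab
  · have hw := ((T.hasWeight_y.pow a).mul (T.hasWeight_D.pow b)).mul (T.hasWeight_y.pow p)
    rw [show (a : ℤ) * 1 + b * -1 + p * 1 = a + p - b by ring] at hw
    rw [hw.mul_mul_eq_zero T.isPrimitiveRoot T.pow_eq_one hab]
    exact M.zero_mem

theorem cornerSpan_le [NeZero n] (T : IsDunklTriple ζ n γ y D) (p : ℕ) :
    cornerSpan K (ε 0) (ε p * y ^ p) (Algebra.adjoin K {D, y, γ}) ≤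
      cornerSpan K (ε 0) (ε 0) (Algebra.adjoin K {D, y, γ}) *
          Submodule.span K {ε 0 * D ^ p * y ^ p} ⊔
        cornerSpan K (ε 0) (ε 0) (Algebra.adjoin K {D, y, γ}) *
          Submodule.span K {ε 0 * y ^ n} := by
  refine Submodule.span_le.mpr ?_
  rintro _ ⟨h, hh, rfl⟩
  refine Submodule.apply_mem_of_mem_span
    (f := LinearMap.mulRight K (ε p * y ^ p) ∘ₗ LinearMap.mulLeft K (ε 0)) ?_
    (adjoin_subset_monomialSpan T.y_mul_γ T.D_mul_γ T.commutator_mem hh)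
  rintro _ ⟨c, a, b, -, rfl⟩
  exact T.sandwich_monomial_mem le_sup_left le_sup_right c a b

theorem le_cornerSpan [NeZero n] (T : IsDunklTriple ζ n γ y D) {p : ℕ} (hp : p ≤ n) :
    cornerSpan K (ε 0) (ε 0) (Algebra.adjoin K {D, y, γ}) *
          Submodule.span K {ε 0 * D ^ p * y ^ p} ⊔
        cornerSpan K (ε 0) (ε 0) (Algebra.adjoin K {D, y, γ}) *
          Submodule.span K {ε 0 * y ^ n} ≤
      cornerSpan K (ε 0) (ε p * y ^ p) (Algebra.adjoin K {D, y, γ}) := by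
  refine sup_le (cornerSpan_mul_span_singleton_le (x := D ^ p)
    (Subalgebra.pow_mem _ (Algebra.subset_adjoin (by simp)) _) ?_)
    (cornerSpan_mul_span_singleton_le (x := y ^ (n - p))
    (Subalgebra.pow_mem _ (Algebra.subset_adjoin (by simp)) _) ?_)
  · rw [← mul_assoc, ← mul_assoc, T.idem_mul_idem, T.idem_mul_D_pow, mul_assoc]
  · rw [← mul_assoc, T.idem_mul_idem, ← T.idem_commute_y_pow,
      show y ^ n = y ^ (n - p) * y ^ p by rw [← pow_add, Nat.sub_add_cancel hp], mul_assoc,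
      T.y_pow_mul_idem]

end IsDunklTriple

theorem statement6_general {Q : Type*} [Ring Q] [Algebra ℂ Q] (n : ℕ) (hn : 0 < n)
    (y yinv d γ : Q)
    (hy : y * yinv = 1) (hy' : yinv * y = 1)
    (hWeyl : d * y - y * d = 1)
    (hγ : γ ^ n = 1)
    (hyγ : y * γ = omegaRoot n • (γ * y))
    (hγd : γ * d = omegaRoot n • (d * γ))
    (e : ℕ → Q)
    (he : ∀ i, e i = (n : ℂ)⁻¹ • ∑ j ∈ range n, ((omegaRoot n) ^ i • γ) ^ j)
    (k' : ℤ → ℂ)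
    (p : ℕ) (hpn : p ≤ n - 1)
    (dk' : Q)
    (hdk' : dk' = d - yinv * ∑ i ∈ Icc 1 (n - 1), k' i • e i)
    (U' B : Submodule ℂ Q)
    (hU' : U' = Submodule.span ℂ
      ((fun h => e 0 * h * e 0) '' (Algebra.adjoin ℂ {dk', y, γ} : Set Q)))
    (hB : B = Submodule.span ℂ
      ((fun h => e 0 * h * (e p * y ^ p)) '' (Algebra.adjoin ℂ {dk', y, γ} : Set Q))) :
    B = U' * Submodule.span ℂ {e 0 * dk' ^ p * y ^ p}
        ⊔ U' * Submodule.span ℂ {e 0 * y ^ n} := by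
  have : NeZero n := ⟨hn.ne'⟩
  have hζ : IsPrimitiveRoot (omegaRoot n) n := Complex.isPrimitiveRoot_exp n hn.ne'
  have he' : ∀ i : ℕ, e i = cyclicIdempotent (omegaRoot n) n γ i := fun i => by
    rw [he, cyclicIdempotent, zpow_natCast]
  have T : IsDunklTriple (omegaRoot n) n γ y dk' :=
    hdk' ▸ isDunklTriple_sub_inv_mul hζ hγ hy hy' hWeyl hyγ hγd
      (Submodule.sum_mem _ fun i _ =>
        Submodule.smul_mem _ _ (he' i ▸ cyclicIdempotent_mem_span _))
  subst hU' hB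
  simp only [he', Nat.cast_zero]
  exact le_antisymm (T.cornerSpan_le p) (T.le_cornerSpan (by omega))

/-- With `k' = k + w_p` (`1 ≤ p ≤ n−1`), the basic bimodule
`B(k', k) = e H_{k'} e_p y^p` satisfies
`B(k', k) = U_{k'} · e d_{k'}^p y^p + U_{k'} · e y^n` as left `U_{k'}`-modules in `Q`. -/
theorem statement6 {Q : Type*} [Ring Q] [Algebra ℂ Q] (n : ℕ) (hn : 0 < n)
    (y yinv d γ : Q)
    (hy : y * yinv = 1) (hy' : yinv * y = 1)
    (hWeyl : d * y - y * d = 1)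
    (hγ : γ ^ n = 1)
    (hyγ : y * γ = omegaRoot n • (γ * y))
    (hγd : γ * d = omegaRoot n • (d * γ))
    (e : ℕ → Q)
    (he : ∀ i, e i = (n : ℂ)⁻¹ • ∑ j ∈ range n, ((omegaRoot n) ^ i • γ) ^ j)
    (k k' : ℤ → ℂ) (hk0 : k 0 = 0) (hkper : ∀ j : ℤ, k (j + n) = k j)
    (p : ℕ) (hp1 : 1 ≤ p) (hpn : p ≤ n - 1)
    (hk'0 : k' 0 = 0) (hk'per : ∀ j : ℤ, k' (j + n) = k' j)
    (hk'lo : ∀ i : ℕ, 1 ≤ i → i ≤ p → k' i = k i + n)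
    (hk'hi : ∀ i : ℕ, p < i → i ≤ n - 1 → k' i = k i)
    (dk dk' : Q)
    (hdk : dk = d - yinv * ∑ i ∈ Icc 1 (n - 1), k i • e i)
    (hdk' : dk' = d - yinv * ∑ i ∈ Icc 1 (n - 1), k' i • e i)
    (U' B : Submodule ℂ Q)
    (hU' : U' = Submodule.span ℂ
      ((fun h => e 0 * h * e 0) '' (Algebra.adjoin ℂ {dk', y, γ} : Set Q)))
    (hB : B = Submodule.span ℂ
      ((fun h => e 0 * h * (e p * y ^ p)) '' (Algebra.adjoin ℂ {dk', y, γ} : Set Q))) :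
    B = U' * Submodule.span ℂ {e 0 * dk' ^ p * y ^ p}
        ⊔ U' * Submodule.span ℂ {e 0 * y ^ n} :=
  statement6_general n hn y yinv d γ hy hy' hWeyl hγ hyγ hγd e he k' p hpn dk' hdk' U' B hU' hB
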